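/- A mixed primitive cyclic string u is a cyclic permutation of a band if and only if u is permutable, i.e., every rotation α_k...α_1α_n...α_{k+1} (1 ≤ k < n) of u = α_n...α_1 is again a string. -/

import Mathlib

/-- A quiver with a set of monomial relations, presenting a string algebra. -/
structure SAQuiver where
  V : Type
  A : Type
  src : A → V
  tgt : A → V
  rel : Set (List A)

namespace SA

variable (S : SAQuiver)

/-- A syllable: a direct arrow (`Sum.inl`) or the formal inverse of an arrow (`Sum.inr`). -/
abbrev Syl := S.A ⊕ S.A

/-- A word of syllables, listed in order of traversal (the head is the first,
i.e. rightmost, syllable in the usual right-to-left notation `αₙ…α₁`). -/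
abbrev Word := List (Syl S)

def sylSrc : Syl S → S.V
  | Sum.inl a => S.src a
  | Sum.inr a => S.tgt a

def sylTgt : Syl S → S.V
  | Sum.inl a => S.tgt a
  | Sum.inr a => S.src a

def sylInv : Syl S → Syl S
  | Sum.inl a => Sum.inr a
  | Sum.inr a => Sum.inl a

/-- Consecutive syllables compose as a walk. -/
def IsWalk : Word S → Prop
  | [] => True
  | [_] => True
  | x :: y :: l => sylTgt S x = sylSrc S y ∧ IsWalk (y :: l)

/-- No two consecutive syllables are inverse to each other. -/
def Reduced : Word S → Prop
  | x :: y :: l => y ≠ sylInv S x ∧ Reduced (y :: l)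
  | _ => True

/-- No subword is a relation or the inverse of a relation. -/
def AvoidsRel (w : Word S) : Prop :=
  ∀ p ∈ S.rel, ¬ ((p.map (Sum.inl : S.A → Syl S)) <:+: w) ∧
    ¬ ((p.map (Sum.inr : S.A → Syl S)).reverse <:+: w)

/-- A (finite, nonempty) string. -/
def IsStr (w : Word S) : Prop :=
  w ≠ [] ∧ IsWalk S w ∧ Reduced S w ∧ AvoidsRel S w

def wSrc : Word S → Option S.V
  | [] => none
  | x :: _ => some (sylSrc S x)

def wTgt (w : Word S) : Option S.V := w.getLast?.map (sylTgt S)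

/-- A cyclic word: its target equals its source. -/
def Cyclic (w : Word S) : Prop := w ≠ [] ∧ wSrc S w = wTgt S w

/-- The `n`-th power of a word under concatenation. -/
def pow (w : Word S) (n : ℕ) : Word S := (List.replicate n w).flatten

/-- A word containing both a direct and an inverse syllable. -/
def Mixed (w : Word S) : Prop := (∃ a, Sum.inl a ∈ w) ∧ (∃ a, Sum.inr a ∈ w)

/-- A word that is not a proper power of a shorter word. -/
def Primitive (w : Word S) : Prop := ¬ ∃ (u : Word S) (k : ℕ), 2 ≤ k ∧ w = pow S u k

/-- A rotation (cyclic permutation) of a word. -/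
def IsRotation (u w : Word S) : Prop := ∃ l₁ l₂ : Word S, w = l₁ ++ l₂ ∧ u = l₂ ++ l₁

/-- A band: a primitive mixed cyclic string, all of whose powers are strings, whose first
syllable is inverse and whose last syllable is direct. -/
def IsBand (w : Word S) : Prop :=
  IsStr S w ∧ Cyclic S w ∧ Primitive S w ∧
    (∃ a, w.head? = some (Sum.inr a)) ∧ (∃ a, w.getLast? = some (Sum.inl a)) ∧
    ∀ n : ℕ, 1 ≤ n → IsStr S (pow S w n)

/-- A cyclic permutation of a band. -/
def RotOfBand (u : Word S) : Prop := ∃ b, IsBand S b ∧ IsRotation S u b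

/-- A prime band: no cyclic permutation of it is a concatenation of two or more cyclic
permutations of bands. -/
def IsPrimeBand (w : Word S) : Prop :=
  IsBand S w ∧
    ¬ ∃ (w' : Word S) (parts : List (Word S)), IsRotation S w' w ∧ 2 ≤ parts.length ∧
        w' = parts.flatten ∧ ∀ p ∈ parts, RotOfBand S p

/-- A word containing no cyclic permutation of a band as a subword. -/
def BandFree (w : Word S) : Prop := ¬ ∃ u, RotOfBand S u ∧ u <:+: w

/-- A word all of whose syllables are direct. -/
def DirectWord (w : Word S) : Prop := ∀ x ∈ w, ∃ a, x = Sum.inl a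

/-- A word all of whose syllables are inverse. -/
def InverseWord (w : Word S) : Prop := ∀ x ∈ w, ∃ a, x = Sum.inr a

/-- A string which is a substring of a cyclic permutation of a band. -/
def Extendable (w : Word S) : Prop := ∃ u, RotOfBand S u ∧ w <:+: u

/-- The axioms for `(Q, ρ)` to present a string algebra. -/
def IsStringAlgebra : Prop :=
  Finite S.V ∧ Finite S.A ∧
  (∀ p ∈ S.rel, p ≠ [] ∧ IsWalk S (p.map (Sum.inl : S.A → Syl S))) ∧
  {p : List S.A | p ≠ [] ∧ IsWalk S (p.map (Sum.inl : S.A → Syl S)) ∧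
      ∀ q ∈ S.rel, ¬ (q <:+: p)}.Finite ∧
  (∀ v : S.V, ¬ ∃ a b c : S.A, a ≠ b ∧ b ≠ c ∧ a ≠ c ∧
      S.src a = v ∧ S.src b = v ∧ S.src c = v) ∧
  (∀ v : S.V, ¬ ∃ a b c : S.A, a ≠ b ∧ b ≠ c ∧ a ≠ c ∧
      S.tgt a = v ∧ S.tgt b = v ∧ S.tgt c = v) ∧
  (∀ b c₁ c₂ : S.A, c₁ ≠ c₂ → IsStr S [Sum.inl b, Sum.inl c₁] →
      ¬ IsStr S [Sum.inl b, Sum.inl c₂]) ∧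
  (∀ b a₁ a₂ : S.A, a₁ ≠ a₂ → IsStr S [Sum.inl a₁, Sum.inl b] →
      ¬ IsStr S [Sum.inl a₂, Sum.inl b])

end SA

namespace SA

variable (S : SAQuiver)

/-! ### Sign functions and hammocks -/

/-- `σ` of a syllable: `σ(a) = σ a`, `σ(B) = ε b`. -/
def sylSg (σ ε : S.A → ℤ) : Syl S → ℤ
  | Sum.inl a => σ a
  | Sum.inr a => ε a

/-- `ε` of a syllable: `ε(a) = ε a`, `ε(B) = σ b`. -/
def sylEp (σ ε : S.A → ℤ) : Syl S → ℤ
  | Sum.inl a => ε a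
  | Sum.inr a => σ a

/-- The conditions on the chosen sign maps `σ, ε : Q₁ → {±1}`. -/
def SignOK (σ ε : S.A → ℤ) : Prop :=
  (∀ a, σ a = 1 ∨ σ a = -1) ∧ (∀ a, ε a = 1 ∨ ε a = -1) ∧
  (∀ a b, a ≠ b → S.src a = S.src b → σ a = -σ b) ∧
  (∀ a b, a ≠ b → S.tgt a = S.tgt b → ε a = -ε b) ∧
  (∀ c b : S.A, IsStr S [Sum.inl c, Sum.inl b] → σ b = -ε c)

/-- Membership in the hammock `H_r(v)`: strings ending at `v` with `ε`-value `1`;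
the empty word stands for the lazy string `1_{(v,1)}`. -/
def HrMem (σ ε : S.A → ℤ) (v : S.V) (w : Word S) : Prop :=
  w = [] ∨ (IsStr S w ∧ wTgt S w = some v ∧
    ∃ s, w.getLast? = some s ∧ sylEp S σ ε s = 1)

/-- The order `<_r` on `H_r(v)`:  `u <_r v` iff `v = u a x`, or `u = v B y`, or
`v = z a x ∧ u = z B y`. -/
def ltr (u v : Word S) : Prop :=
  (∃ (a : S.A) (x : Word S), v = x ++ [Sum.inl a] ++ u) ∨
  (∃ (b : S.A) (y : Word S), u = y ++ [Sum.inr b] ++ v) ∨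
  (∃ (a b : S.A) (x y z : Word S),
      v = x ++ [Sum.inl a] ++ z ∧ u = y ++ [Sum.inr b] ++ z)

/-- The inverse of a word. -/
def wInv (w : Word S) : Word S := (w.map (sylInv S)).reverse

/-- Membership in the hammock `H_l(v)`: strings starting at `v` with `σ`-value `-1`;
the empty word stands for the lazy string `1_{(v,-1)}`'s role in `H_l(v)`. -/
def HlMem (σ ε : S.A → ℤ) (v : S.V) (w : Word S) : Prop :=
  w = [] ∨ (IsStr S w ∧ wSrc S w = some v ∧
    ∃ s, w.head? = some s ∧ sylSg S σ ε s = -1)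

/-- The order `<_l` on `H_l(v)`: `u <_l v` iff `v⁻¹ <_r u⁻¹`. -/
def ltl (u v : Word S) : Prop := ltr S (wInv S v) (wInv S u)

/-- `v` is the direct successor of `u` in the total order `lt` restricted to `P`. -/
def DirSucc (P : Word S → Prop) (lt : Word S → Word S → Prop) (u v : Word S) : Prop :=
  P u ∧ P v ∧ lt u v ∧ ¬ ∃ w, P w ∧ lt u w ∧ lt w v

/-- A finite interval (chain of consecutive elements) in a hammock whose length sequence is
monotone. -/
def MonoChain (P : Word S → Prop) (lt : Word S → Word S → Prop) (n : ℕ)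
    (c : ℕ → Word S) : Prop :=
  (∀ i < n, DirSucc S P lt (c i) (c (i + 1))) ∧
  ((∀ i < n, (c i).length < (c (i + 1)).length) ∨
   (∀ i < n, (c (i + 1)).length < (c i).length))

/-- Torsion-freeness for one hammock: every finite interval with monotone length sequence
extends (on one of its two ends) to a strictly larger such interval. -/
def TFfor (P : Word S → Prop) (lt : Word S → Word S → Prop) : Prop :=
  ∀ (n : ℕ) (c : ℕ → Word S), MonoChain S P lt n c →
    ∃ c' : ℕ → Word S, MonoChain S P lt (n + 1) c' ∧
      ((∀ i ≤ n, c' i = c i) ∨ (∀ i ≤ n, c' (i + 1) = c i))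

/-- A torsion-free string algebra: both the left and right hammock conditions hold at
every vertex. -/
def TorsionFree (σ ε : S.A → ℤ) : Prop :=
  (∀ v : S.V, TFfor S (HrMem S σ ε v) (ltr S)) ∧
  (∀ v : S.V, TFfor S (HlMem S σ ε v) (ltl S))

/-! ### Bridges and the bridge quiver -/

/-- A weak bridge `b₁ → b₂`: a band-free string `u` (possibly of length zero) such that
`b₂ u b₁` is a string. -/
def IsWeakBridge (b₁ u b₂ : Word S) : Prop :=
  IsPrimeBand S b₁ ∧ IsPrimeBand S b₂ ∧ BandFree S u ∧ IsStr S (b₁ ++ u ++ b₂)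

/-- A bridge: a weak bridge which does not factor through another prime band. -/
def IsBridge (b₁ u b₂ : Word S) : Prop :=
  IsWeakBridge S b₁ u b₂ ∧
  ¬ ∃ (bb u₁ u₂ : Word S), IsPrimeBand S bb ∧ IsWeakBridge S b₁ u₁ bb ∧
      IsWeakBridge S bb u₂ b₂ ∧
      ((u = u₁ ++ u₂ ∧ u₁ ≠ [] ∧ u₂ ≠ []) ∨
       (∃ u₁' u₂' u₁'' u₂'' : Word S, u = u₁' ++ u₂' ∧ u₁' ≠ [] ∧ u₂' ≠ [] ∧
          u₁ = u₁' ++ u₁'' ∧ u₂ = u₂'' ++ u₂' ∧ bb = u₁'' ++ u₂''))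

/-- `R` is a set of representatives of the prime bands up to cyclic permutation. -/
def RepSet (R : Set (Word S)) : Prop :=
  (∀ r ∈ R, IsPrimeBand S r) ∧
  ∀ b, IsPrimeBand S b → ∃! r, r ∈ R ∧ IsRotation S b r

/-- One arrow of the bridge quiver with vertex set `R`. -/
def Step (R : Set (Word S)) (x y : Word S) : Prop :=
  x ∈ R ∧ y ∈ R ∧ ∃ u, IsBridge S x u y

/-- Reachability by a directed path in the bridge quiver. -/
def Reach (R : Set (Word S)) : Word S → Word S → Prop :=
  Relation.ReflTransGen (Step S R)

/-- Adjacency (in either direction) in the bridge quiver. -/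
def Adj (R : Set (Word S)) (x y : Word S) : Prop := Step S R x y ∨ Step S R y x

/-- Lying in the same connected component of the bridge quiver. -/
def SameComp (R : Set (Word S)) : Word S → Word S → Prop :=
  Relation.ReflTransGen (Adj S R)

/-- `x` lies on a meta-band, i.e. on a directed cycle of positive length in the bridge
quiver. -/
def OnMetaBand (R : Set (Word S)) (x : Word S) : Prop :=
  (∃ u, IsBridge S x u x ∧ u ≠ []) ∨
  (∃ y, y ≠ x ∧ y ∈ R ∧ Reach S R x y ∧ Reach S R y x)

/-- A meta-`⋃`-cyclic string algebra: each connected component of the bridge quiver has at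
least two vertices and is a union of meta-bands (every vertex and every arrow lies on a
directed cycle of positive length). -/
def MetaUCyclic (R : Set (Word S)) : Prop :=
  (∀ x ∈ R, ∃ y ∈ R, y ≠ x ∧ SameComp S R x y) ∧
  (∀ x ∈ R, OnMetaBand S R x) ∧
  (∀ x y u, x ∈ R → y ∈ R → IsBridge S x u y → Reach S R y x)

/-- A meta-torsion-free string algebra: each connected component of the bridge quiver has
at least two vertices, and every finite directed path of positive length extends to a
`ℤ`-indexed directed path. -/
def MetaTorsionFree (R : Set (Word S)) : Prop :=
  (∀ x ∈ R, ∃ y ∈ R, y ≠ x ∧ SameComp S R x y) ∧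
  (∀ (n : ℕ) (c e : ℕ → Word S), 0 < n → (∀ i ≤ n, c i ∈ R) →
    (∀ i < n, IsBridge S (c i) (e i) (c (i + 1))) →
    ∃ (g d : ℤ → Word S), (∀ i : ℤ, g i ∈ R) ∧
      (∀ i : ℤ, IsBridge S (g i) (d i) (g (i + 1))) ∧
      (∀ i : ℕ, i ≤ n → g (i : ℤ) = c i) ∧ (∀ i : ℕ, i < n → d (i : ℤ) = e i))

/-- A non-domestic string algebra: one with infinitely many bands. -/
def NonDomestic : Prop := ¬ {b : Word S | IsBand S b}.Finite

end SA

/-!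
Every rotation of a band `b` is a subword of `b²`, which is a string. Conversely, a mixed word
has a rotation `b` that starts with an inverse and ends with a direct syllable. If all rotations
are strings, then `b.rotate 1` supplies the walk and reducedness conditions at the junction of
two consecutive copies of `b` (and makes `b` cyclic), while a relation or inverse relation in a
power of `b` cannot straddle a junction: it would contain the inverse first or the direct last
syllable of `b`.
-/

namespace List

variable {α : Type*}

theorem IsRotated.infix_append_self {l l' : List α} (h : l ~r l') : l' <:+: l ++ l := by
  obtain ⟨n, hn, rfl⟩ := isRotated_iff_mod.1 h
  rw [rotate_eq_drop_append_take hn]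
  refine ⟨l.take n, l.drop n, ?_⟩
  simp only [append_assoc]
  rw [← append_assoc (l.take n), take_append_drop]

theorem isChain_flatten_replicate {R : α → α → Prop} {l : List α} (hl : l.IsChain R)
    (hjoin : ∀ x ∈ l.getLast?, ∀ y ∈ l.head?, R x y) (n : ℕ) :
    (replicate n l).flatten.IsChain R := by
  rcases eq_or_ne l [] with rfl | hne
  · simp
  rw [isChain_flatten (by simp [hne.symm])]
  exact ⟨by simp [hl], isChain_replicate_of_rel n hjoin⟩

theorem infix_of_infix_flatten_replicate {p : α → Prop} {l v : List α} (hv : ∀ x ∈ v, p x)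
    (hl : ∀ x ∈ l.head?, ¬ p x) {n : ℕ} (h : v <:+: (replicate n l).flatten) : v <:+: l := by
  induction n with
  | zero => simp_all
  | succ n ih =>
    rw [replicate_succ, flatten_cons, infix_append_iff] at h
    rcases h with h | h | ⟨v₁, v₂, rfl, hv₁, hv₂⟩
    · exact h
    · exact ih h
    · rcases eq_or_ne v₂ [] with rfl | hne
      · simpa using hv₁.isInfix
      obtain ⟨y, v₂, rfl⟩ := exists_cons_of_ne_nil hne
      have hy : y ∈ (replicate n l).flatten.head? := by
        obtain ⟨t, ht⟩ := hv₂; simp [← ht]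
      rcases eq_or_ne n 0 with rfl | hn
      · simp at hy
      rw [head?_flatten_replicate hn] at hy
      exact absurd (hv y (by simp)) (hl y hy)

theorem cons_flatten_replicate_append_concat (x : α) (r : List α) (k : ℕ) :
    x :: (replicate k (r ++ [x])).flatten = (replicate k (x :: r)).flatten ++ [x] := by
  induction k with
  | zero => rfl
  | succ k ih => simp [replicate_succ, ih]

theorem rotate_flatten_replicate (l : List α) (k n : ℕ) :
    (replicate k l).flatten.rotate n = (replicate k (l.rotate n)).flatten := by
  induction n with
  | zero => simp
  | succ n ih =>
    rw [← rotate_rotate, ih, ← rotate_rotate l n 1]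
    obtain _ | ⟨x, r⟩ := l.rotate n
    · simp
    · cases k
      · simp
      · simp [replicate_succ, ← cons_flatten_replicate_append_concat]

theorem rel_getLast_head_of_isChain_rotate_one {R : α → α → Prop} {l : List α}
    (hl : 1 < l.length) (h : (l.rotate 1).IsChain R) :
    ∀ x ∈ l.getLast?, ∀ y ∈ l.head?, R x y := by
  obtain _ | ⟨y, _ | ⟨z, r⟩⟩ := l
  all_goals simp at hl
  simp only [rotate_cons_succ, rotate_zero, isChain_append] at h
  simpa using h.2.2

theorem exists_isRotated_head_getLast {p : α → Prop} {l : List α} (hp : ∃ x ∈ l, p x)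
    (hnp : ∃ x ∈ l, ¬ p x) :
    ∃ l', l ~r l' ∧ (∃ y ∈ l'.head?, ¬ p y) ∧ ∃ x ∈ l'.getLast?, p x := by
  by_cases hc : l.IsChain (fun x y => p x → p y)
  · have : Trans (fun x y : α => p x → p y) (fun x y => p x → p y) (fun x y => p x → p y) :=
      ⟨fun h₁ h₂ hx => h₂ (h₁ hx)⟩
    have hpw := hc.pairwise
    obtain ⟨x, hx, hpx⟩ := hp
    obtain ⟨y, hy, hny⟩ := hnp
    refine ⟨l, IsRotated.refl l, ?_, ?_⟩
    · obtain ⟨z, t, rfl⟩ := exists_cons_of_ne_nil (ne_nil_of_mem hy)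
      refine ⟨z, rfl, fun hz => hny ?_⟩
      rcases mem_cons.1 hy with rfl | hy
      · exact hz
      · exact rel_of_pairwise_cons hpw hy hz
    · obtain ⟨s, z, rfl⟩ : ∃ s z, l = s ++ [z] :=
        ⟨_, _, (dropLast_append_getLast (ne_nil_of_mem hx)).symm⟩
      refine ⟨z, by simp, ?_⟩
      rcases mem_append.1 hx with hx | hx
      · exact (pairwise_append.1 hpw).2.2 x hx z (mem_singleton_self z) hpx
      · rwa [mem_singleton.1 hx] at hpx
  · obtain ⟨a, b, l₁, l₂, rfl, ha, hb⟩ : ∃ a b l₁ l₂, l = l₁ ++ a :: b :: l₂ ∧ p a ∧ ¬ p b := by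
      simpa [isChain_iff_forall_rel_of_append_cons_cons] using hc
    refine ⟨b :: l₂ ++ (l₁ ++ [a]), ?_, by simpa using hb, ⟨a, ?_, ha⟩⟩
    · simpa using isRotated_append (l := l₁ ++ [a]) (l' := b :: l₂)
    · rw [getLast?_append_of_ne_nil _ (by simp)]; simp

end List

namespace SA

variable {S : SAQuiver}

theorem isRotation_iff_isRotated {u w : Word S} : IsRotation S u w ↔ w ~r u := by
  constructor
  · rintro ⟨l₁, l₂, rfl, rfl⟩
    exact List.isRotated_append
  · intro h
    obtain ⟨n, hn, rfl⟩ := List.isRotated_iff_mod.1 h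
    exact ⟨w.take n, w.drop n, (List.take_append_drop n w).symm,
      List.rotate_eq_drop_append_take hn⟩

theorem isWalk_iff_isChain :
    ∀ w : Word S, IsWalk S w ↔ w.IsChain (fun x y => sylTgt S x = sylSrc S y)
  | [] | [_] => by simp [IsWalk]
  | x :: y :: l => by simp [IsWalk, isWalk_iff_isChain (y :: l)]

theorem reduced_iff_isChain : ∀ w : Word S, Reduced S w ↔ w.IsChain (fun x y => y ≠ sylInv S x)
  | [] | [_] => by simp [Reduced]
  | x :: y :: l => by simp [Reduced, reduced_iff_isChain (y :: l)]

theorem IsStr.of_infix {v w : Word S} (hw : IsStr S w) (hvw : v <:+: w) (hv : v ≠ []) :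
    IsStr S v := by
  obtain ⟨-, hwalk, hred, havoid⟩ := hw
  refine ⟨hv, ?_, ?_, fun p hp => ?_⟩
  · exact (isWalk_iff_isChain v).2 (((isWalk_iff_isChain w).1 hwalk).infix hvw)
  · exact (reduced_iff_isChain v).2 (((reduced_iff_isChain w).1 hred).infix hvw)
  · exact (havoid p hp).imp (mt (·.trans hvw)) (mt (·.trans hvw))

theorem IsBand.isStr_of_isRotated {b w : Word S} (hb : IsBand S b) (hbw : b ~r w) :
    IsStr S w := by
  refine (hb.2.2.2.2.2 2 one_le_two).of_infix (by simpa [pow] using hbw.infix_append_self) ?_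
  exact fun hw => hb.1.1 (List.isRotated_nil_iff.1 (hw ▸ hbw))

theorem Primitive.of_isRotated {u b : Word S} (hu : Primitive S u) (hub : u ~r b) :
    Primitive S b := by
  rintro ⟨v, k, hk, rfl⟩
  obtain ⟨n, rfl⟩ := hub.symm
  exact hu ⟨v.rotate n, k, hk, List.rotate_flatten_replicate v k n⟩

theorem exists_isRotated_head_inr_getLast_inl {u : Word S} (hu : Mixed S u) :
    ∃ b, u ~r b ∧ (∃ a, b.head? = some (Sum.inr a)) ∧ ∃ c, b.getLast? = some (Sum.inl c) := by
  obtain ⟨⟨c, hc⟩, ⟨a, ha⟩⟩ := hu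
  obtain ⟨b, hub, ⟨y, hy, hny⟩, ⟨x, hx, hpx⟩⟩ :=
    List.exists_isRotated_head_getLast (p := fun x : Syl S => x.isLeft) ⟨_, hc, rfl⟩
      ⟨_, ha, by simp⟩
  obtain y | a := y
  · simp at hny
  obtain c | x := x
  · exact ⟨b, hub, ⟨a, hy⟩, ⟨c, hx⟩⟩
  · simp at hpx

variable {b : Word S} {a c : S.A}

theorem one_lt_length_of_head?_getLast? (ha : b.head? = some (Sum.inr a))
    (hc : b.getLast? = some (Sum.inl c)) : 1 < b.length := by
  obtain _ | ⟨y, _ | ⟨z, r⟩⟩ := b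
  · simp at ha
  · simp_all
  · simp

theorem cyclic_of_isWalk_rotate_one (hb : 1 < b.length) (h : IsWalk S (b.rotate 1)) :
    Cyclic S b := by
  have hjoin := List.rel_getLast_head_of_isChain_rotate_one hb ((isWalk_iff_isChain _).1 h)
  obtain _ | ⟨y, r⟩ := b
  · simp at hb
  have hz := List.getLast?_eq_some_getLast (l := y :: r) (by simp)
  exact ⟨by simp, by simp [wSrc, wTgt, hz, hjoin _ hz y rfl]⟩

theorem avoidsRel_pow (hb : AvoidsRel S b) (ha : b.head? = some (Sum.inr a))
    (hc : b.getLast? = some (Sum.inl c)) (n : ℕ) : AvoidsRel S (pow S b n) := by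
  refine fun p hp => (hb p hp).imp (mt fun h => ?_) (mt fun h => ?_)
  · exact List.infix_of_infix_flatten_replicate (p := fun x => x.isLeft) (by simp) (by simp [ha]) h
  · rw [← List.reverse_infix] at h ⊢
    refine List.infix_of_infix_flatten_replicate (p := fun x => x.isRight) (by simp) (n := n) ?_ ?_
    · simp [List.head?_reverse, hc]
    · simpa [pow, List.reverse_flatten] using h

theorem isStr_pow (hb : IsStr S b) (hb₁ : IsStr S (b.rotate 1)) (ha : b.head? = some (Sum.inr a))
    (hc : b.getLast? = some (Sum.inl c)) {n : ℕ} (hn : 1 ≤ n) : IsStr S (pow S b n) := by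
  have hlen := one_lt_length_of_head?_getLast? ha hc
  refine ⟨?_, ?_, ?_, avoidsRel_pow hb.2.2.2 ha hc n⟩
  · simpa [pow] using ⟨by omega, hb.1⟩
  · exact (isWalk_iff_isChain _).2 <| List.isChain_flatten_replicate
      ((isWalk_iff_isChain b).1 hb.2.1)
      (List.rel_getLast_head_of_isChain_rotate_one hlen ((isWalk_iff_isChain _).1 hb₁.2.1)) n
  · exact (reduced_iff_isChain _).2 <| List.isChain_flatten_replicate
      ((reduced_iff_isChain b).1 hb.2.2.1)
      (List.rel_getLast_head_of_isChain_rotate_one hlen ((reduced_iff_isChain _).1 hb₁.2.2.1)) n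

end SA

open SA in
theorem rot_of_band_iff_permutable_general (S : SAQuiver)
    (u : Word S) (hm : Mixed S u)
    (hp : Primitive S u) :
    RotOfBand S u ↔ ∀ w : Word S, IsRotation S w u → IsStr S w := by
  simp only [RotOfBand, isRotation_iff_isRotated]
  constructor
  · rintro ⟨b, hb, hbu⟩ w huw
    exact hb.isStr_of_isRotated (hbu.trans huw)
  · intro hperm
    obtain ⟨b, hub, ⟨a, ha⟩, ⟨c, hc⟩⟩ := exists_isRotated_head_inr_getLast_inl hm
    have hb := hperm b hub
    have hb₁ := hperm (b.rotate 1) (hub.trans ⟨1, rfl⟩)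
    have hlen := one_lt_length_of_head?_getLast? ha hc
    refine ⟨b, ⟨hb, cyclic_of_isWalk_rotate_one hlen hb₁.2.1, hp.of_isRotated hub, ⟨a, ha⟩,
      ⟨c, hc⟩, fun n hn => isStr_pow hb hb₁ ha hc hn⟩, hub.symm⟩

open SA in
/-- A mixed primitive cyclic string `u` is a cyclic permutation of a band if and only if it
is permutable, i.e. every rotation of `u` is again a string. -/
theorem rot_of_band_iff_permutable (S : SAQuiver) (hSA : SA.IsStringAlgebra S)
    (u : Word S) (hu : IsStr S u) (hc : Cyclic S u) (hm : Mixed S u)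
    (hp : Primitive S u) :
    RotOfBand S u ↔ ∀ w : Word S, IsRotation S w u → IsStr S w :=
  rot_of_band_iff_permutable_general S u hm hp
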